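/- Let (D,b) be a bilinear T-form and let σ ∈ {0,4}. Then there exists a quadratic refinement q̂ of b that is a T-refinement and whose first Gauss sum is nonzero with τ₁(q̂)/|τ₁(q̂)| = exp(2πiσ/8). Moreover such q̂ is unique up to isometry and argument shift: if q̂ and q̂' are two such T-refinements of b, then there exist a group automorphism γ of D satisfying b(γ(x),γ(y)) = b(x,y) for all x,y and an element δ ∈ D such that q̂'(x) = q̂(γ(x) + δ) for all x ∈ D. -/

import Mathlib

open scoped BigOperators

instance : Fact ((0:ℚ) < 1) := ⟨one_pos⟩

/-- The well-defined map `ℚ/ℤ → ℂ` induced by `a ↦ exp(2πi a)`, computed via the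
canonical representative in `[0,1)`. -/
noncomputable def stdAddChar (x : AddCircle (1 : ℚ)) : ℂ :=
  Complex.exp (2 * Real.pi * Complex.I * (((AddCircle.equivIco (1:ℚ) 0 x : ℚ)) : ℂ))

/-- The first Gauss sum `τ₁(qh) = Σ_{x ∈ D} e(qh(x))`. -/
noncomputable def qGaussSumOne {D : Type*} (q : D → AddCircle (1:ℚ)) : ℂ :=
  ∑ᶠ x : D, stdAddChar (q x)

/-- `qh` is a quadratic T-refinement of `b` with nonzero first Gauss sum of phase
`exp(2πiσ/8)`:  it is a quadratic refinement of `b`, there is an automorphism `γ` of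
`D` such that `qh ∘ γ` is shift-equivalent to `-qh`, and the Gauss sum condition holds. -/
def IsTRefinementWithPhase {D : Type*} [AddCommGroup D] [Fintype D]
    (b : D → D → AddCircle (1:ℚ)) (σ : ℕ) (qh : D → AddCircle (1:ℚ)) : Prop :=
  (∀ x y : D, qh (x + y) - qh x - qh y + qh 0 = b x y) ∧
  (∃ (γ : D ≃+ D) (δ : D), ∀ x : D, qh (γ x) = - qh (x + δ)) ∧
  qGaussSumOne qh ≠ 0 ∧
  qGaussSumOne qh / (‖qGaussSumOne qh‖ : ℂ) =
    Complex.exp (2 * Real.pi * Complex.I * σ / 8)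

set_option linter.unusedSectionVars false
set_option linter.unusedVariables false
set_option linter.unusedTactic false
set_option linter.unnecessarySimpa false

namespace TRef

abbrev QZ := AddCircle (1:ℚ)

variable {D : Type*} [AddCommGroup D] [Fintype D]

lemma coe_eq_zero {r : ℚ} : ((r : QZ) = 0) ↔ ∃ k : ℤ, r = (k:ℚ) := by
  rw [AddCircle.coe_eq_zero_iff]
  constructor
  · rintro ⟨n, hn⟩; exact ⟨n, by simpa using hn.symm⟩
  · rintro ⟨k, hk⟩; exact ⟨k, by simpa using hk.symm⟩

lemma rep_spec (ξ : QZ) : ((AddCircle.equivIco (1:ℚ) 0 ξ : ℚ) : QZ) = ξ := by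
  exact (AddCircle.equivIco (1:ℚ) 0).symm_apply_apply ξ

lemma rep_mem (ξ : QZ) : (AddCircle.equivIco (1:ℚ) 0 ξ : ℚ) ∈ Set.Ico (0:ℚ) 1 := by
  simpa using (AddCircle.equivIco (1:ℚ) 0 ξ).2

lemma stdAddChar_coe (r : ℚ) : stdAddChar (r : QZ) =
    Complex.exp (2 * Real.pi * Complex.I * (r:ℂ)) := by
  unfold stdAddChar
  have h : ((AddCircle.equivIco (1:ℚ) 0 ((r:QZ))) : ℚ) = Int.fract r := by
    simpa using AddCircle.coe_equivIco_mk_apply (p := (1:ℚ)) r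
  rw [h]
  have h2 : (r:ℂ) = (Int.fract r : ℚ) + (⌊r⌋ : ℤ) := by
    push_cast [Int.fract]; ring
  rw [h2, mul_add, Complex.exp_add,
    show (2*(Real.pi:ℂ)*Complex.I*((⌊r⌋:ℤ):ℂ)) = ((⌊r⌋:ℤ):ℂ) * (2*Real.pi*Complex.I) by ring,
    Complex.exp_int_mul_two_pi_mul_I, mul_one]


lemma key_arith (n : ℕ) (hn : 0 < n) (k : ℤ) (a c u w e : ℕ)
    (hu : (u:ℤ) = a + c - w * n) (he : 2 * e = n * (n+1)) :
    ∃ z : ℤ, ((k*(n+1)*u^2)/(2*n) - (k*(n+1)*a^2)/(2*n) - (k*(n+1)*c^2)/(2*n)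
      - a*c*k/n : ℚ) = (z:ℚ) := by
  refine ⟨(a*c*k) - k*(n+1)*w*(a+c) + k*w^2*e, ?_⟩
  have huq : (u:ℚ) = a + c - w * n := by exact_mod_cast hu
  have heq : (2*e : ℚ) = n * (n+1) := by exact_mod_cast he
  have hnq : (n:ℚ) ≠ 0 := Nat.cast_ne_zero.mpr hn.ne'
  rw [huq]
  push_cast
  field_simp
  linear_combination (-((k:ℚ) * (n:ℚ) * (w:ℚ)^2)) * heq


lemma exists_rep (ξ : QZ) : ∃ r : ℚ, ξ = (r : QZ) := ⟨_, (rep_spec ξ).symm⟩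

lemma stdAddChar_add (ξ η : QZ) : stdAddChar (ξ + η) = stdAddChar ξ * stdAddChar η := by
  obtain ⟨r, rfl⟩ := exists_rep ξ; obtain ⟨s, rfl⟩ := exists_rep η
  rw [← AddCircle.coe_add, stdAddChar_coe, stdAddChar_coe, stdAddChar_coe, ← Complex.exp_add]
  push_cast; ring_nf

lemma stdAddChar_zero : stdAddChar (0 : QZ) = 1 := by
  have : ((0:ℚ) : QZ) = 0 := by norm_num
  rw [← this, stdAddChar_coe]; simp

lemma stdAddChar_neg (ξ : QZ) : stdAddChar (-ξ) = (starRingEnd ℂ) (stdAddChar ξ) := by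
  obtain ⟨r, rfl⟩ := exists_rep ξ
  rw [← AddCircle.coe_neg, stdAddChar_coe, stdAddChar_coe, ← Complex.exp_conj]
  congr 1
  simp [Complex.ext_iff]

lemma stdAddChar_ne_zero (ξ : QZ) : stdAddChar ξ ≠ 0 := by
  obtain ⟨r, rfl⟩ := exists_rep ξ; rw [stdAddChar_coe]; exact Complex.exp_ne_zero _

lemma stdAddChar_abs (ξ : QZ) : ‖stdAddChar ξ‖ = 1 := by
  obtain ⟨r, rfl⟩ := exists_rep ξ
  rw [stdAddChar_coe, Complex.norm_exp]
  norm_num [Complex.mul_re]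

lemma stdAddChar_eq_one_iff {ξ : QZ} : stdAddChar ξ = 1 ↔ ξ = 0 := by
  constructor
  · intro h
    unfold stdAddChar at h
    rw [Complex.exp_eq_one_iff] at h
    obtain ⟨n, hn⟩ := h
    set r : ℚ := (AddCircle.equivIco (1:ℚ) 0 ξ : ℚ) with hr
    have h2 : (r : ℂ) = (n : ℂ) := by
      have hpi : (2 * (Real.pi:ℂ) * Complex.I) ≠ 0 := by
        have h1 : (Real.pi:ℂ) ≠ 0 := by exact_mod_cast Real.pi_ne_zero
        exact mul_ne_zero (mul_ne_zero two_ne_zero h1) Complex.I_ne_zero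
      have hn' : (2 * (Real.pi:ℂ) * Complex.I) * (r:ℂ) = (2 * (Real.pi:ℂ) * Complex.I) * (n:ℂ) := by
        rw [hn]; ring
      exact mul_left_cancel₀ hpi hn'
    have h3 : r = (n : ℚ) := by exact_mod_cast h2
    have hb := rep_mem ξ
    rw [← hr] at hb
    have : r = 0 := by
      rcases hb with ⟨hb1, hb2⟩
      rw [h3] at hb1 hb2 ⊢
      have : n = 0 := by exact_mod_cast Int.le_antisymm (by exact_mod_cast Int.lt_add_one_iff.mp (by exact_mod_cast hb2)) (by exact_mod_cast hb1)
      simp [this]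
    rw [← rep_spec ξ, ← hr, this]
    norm_num
  · rintro rfl; exact stdAddChar_zero

lemma stdAddChar_half : stdAddChar ((1/2 : ℚ) : QZ) = -1 := by
  rw [stdAddChar_coe]
  rw [show (2 * (Real.pi:ℂ) * Complex.I * ((1/2:ℚ):ℂ)) = Real.pi * Complex.I by push_cast; ring]
  exact Complex.exp_pi_mul_I


lemma stdAddChar_sub (ξ η : QZ) : stdAddChar (ξ - η) = stdAddChar ξ * (starRingEnd ℂ) (stdAddChar η) := by
  rw [sub_eq_add_neg, stdAddChar_add, stdAddChar_neg]

variable {D : Type*} [AddCommGroup D] [Fintype D]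

lemma qGaussSumOne_eq (q : D → QZ) : qGaussSumOne q = ∑ x : D, stdAddChar (q x) :=
  finsum_eq_sum_of_fintype _

lemma sum_char_eq_zero (ψ : D → QZ) (hψ : ∀ x y, ψ (x + y) = ψ x + ψ y)
    {x₀ : D} (h0 : ψ x₀ ≠ 0) : ∑ x : D, stdAddChar (ψ x) = 0 := by
  set S := ∑ x : D, stdAddChar (ψ x) with hS
  have key : stdAddChar (ψ x₀) * S = S := by
    rw [hS, Finset.mul_sum]
    calc ∑ x : D, stdAddChar (ψ x₀) * stdAddChar (ψ x)
        = ∑ x : D, stdAddChar (ψ (x₀ + x)) := by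
          refine Finset.sum_congr rfl fun x _ => ?_
          rw [hψ, stdAddChar_add]
      _ = ∑ x : D, stdAddChar (ψ x) := Equiv.sum_comp (Equiv.addLeft x₀) (fun x => stdAddChar (ψ x))
  have hne : stdAddChar (ψ x₀) - 1 ≠ 0 := by
    intro h
    exact h0 (stdAddChar_eq_one_iff.mp (by linear_combination h))
  have : (stdAddChar (ψ x₀) - 1) * S = 0 := by linear_combination key
  rcases mul_eq_zero.mp this with h | h
  · exact absurd h hne
  · exact h

lemma qGauss_shift (q : D → QZ) (t : D) :
    qGaussSumOne (fun x => q (x + t)) = qGaussSumOne q := by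
  rw [qGaussSumOne_eq, qGaussSumOne_eq]
  exact Equiv.sum_comp (Equiv.addRight t) (fun x => stdAddChar (q x))

lemma qGauss_const (q : D → QZ) (c : QZ) :
    qGaussSumOne (fun x => q x + c) = stdAddChar c * qGaussSumOne q := by
  rw [qGaussSumOne_eq, qGaussSumOne_eq, Finset.mul_sum]
  refine Finset.sum_congr rfl fun x _ => ?_
  rw [stdAddChar_add]; ring

lemma qGauss_normSq (b : D → D → QZ)
    (hadd : ∀ x y z : D, b (x + y) z = b x z + b y z)
    (hnd : ∀ x : D, (∀ y : D, b x y = 0) → x = 0)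
    (hsymm : ∀ x y : D, b x y = b y x)
    (q : D → QZ) (hq : ∀ x y, q (x + y) - q x - q y + q 0 = b x y) :
    qGaussSumOne q * (starRingEnd ℂ) (qGaussSumOne q) = (Fintype.card D : ℂ) := by
  classical
  have hb0 : ∀ y, b 0 y = 0 := by
    intro y
    have := hadd 0 0 y
    rw [add_zero] at this
    exact left_eq_add.mp this
  rw [qGaussSumOne_eq, map_sum, Finset.sum_mul_sum, Finset.sum_comm]
  have step1 : ∀ y : D, ∑ x : D, stdAddChar (q x) * (starRingEnd ℂ) (stdAddChar (q y))
      = ∑ u : D, stdAddChar (q u - q 0) * stdAddChar (b y u) := by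
    intro y
    calc ∑ x : D, stdAddChar (q x) * (starRingEnd ℂ) (stdAddChar (q y))
        = ∑ u : D, stdAddChar (q (y + u)) * (starRingEnd ℂ) (stdAddChar (q y)) :=
          (Equiv.sum_comp (Equiv.addLeft y) (fun x => stdAddChar (q x) * (starRingEnd ℂ) (stdAddChar (q y)))).symm
      _ = ∑ u : D, stdAddChar (q u - q 0) * stdAddChar (b y u) := by
          refine Finset.sum_congr rfl fun u _ => ?_
          rw [← stdAddChar_sub, ← stdAddChar_add]
          congr 1
          rw [← hq y u]; abel
  rw [Finset.sum_congr rfl (fun y _ => step1 y), Finset.sum_comm]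
  have split : ∀ u : D, ∑ y : D, stdAddChar (q u - q 0) * stdAddChar (b y u)
      = stdAddChar (q u - q 0) * ∑ y : D, stdAddChar (b y u) := by
    intro u; rw [Finset.mul_sum]
  rw [Finset.sum_congr rfl (fun u _ => split u)]
  have inner : ∀ u : D, (∑ y : D, stdAddChar (b y u)) = if u = 0 then (Fintype.card D : ℂ) else 0 := by
    intro u
    by_cases hu : u = 0
    · subst hu
      rw [if_pos rfl]
      have : ∀ y : D, b y 0 = 0 := fun y => by rw [hsymm]; exact hb0 y
      rw [Finset.sum_congr rfl (fun y _ => by rw [this y, stdAddChar_zero])]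
      simp [Finset.card_univ]
    · rw [if_neg hu]
      have hex : ∃ y₀, b y₀ u ≠ 0 := by
        by_contra h
        push_neg at h
        exact hu (hnd u (fun y => by rw [hsymm]; exact h y))
      obtain ⟨y₀, hy₀⟩ := hex
      exact sum_char_eq_zero (fun y => b y u) (fun x y => hadd x y u) hy₀
  rw [Finset.sum_congr rfl (fun u _ => by rw [inner u])]
  have : (∑ u : D, stdAddChar (q u - q 0) * if u = 0 then (Fintype.card D : ℂ) else 0)
      = ∑ u : D, if u = 0 then stdAddChar (q u - q 0) * (Fintype.card D : ℂ) else 0 := by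
    refine Finset.sum_congr rfl fun u _ => ?_
    by_cases h : u = 0 <;> simp [h]
  rw [this, Finset.sum_ite_eq' Finset.univ (0:D)
    (fun u => stdAddChar (q u - q 0) * (Fintype.card D : ℂ))]
  simp [stdAddChar_zero, sub_self]


lemma coe_int_eq_zero (k : ℤ) : (((k:ℚ)) : QZ) = 0 := coe_eq_zero.mpr ⟨k, rfl⟩

lemma coe_nsmul' (m : ℕ) (r : ℚ) : m • ((r : ℚ) : QZ) = (((m:ℚ) * r : ℚ) : QZ) := by
  rw [← AddCircle.coe_nsmul, nsmul_eq_mul]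

def HasRef (A : Type*) [AddCommGroup A] : Prop :=
  ∀ b : A → A → QZ, (∀ x y, b x y = b y x) → (∀ x y z, b (x+y) z = b x z + b y z) →
    ∃ q : A → QZ, ∀ x y, q (x+y) - q x - q y + q 0 = b x y

lemma b_zero_left {A : Type*} [AddCommGroup A] {b : A → A → QZ}
    (ha : ∀ x y z : A, b (x+y) z = b x z + b y z) (y : A) : b 0 y = 0 := by
  have := ha 0 0 y; rw [add_zero] at this; exact left_eq_add.mp this

lemma b_nsmul_left {A : Type*} [AddCommGroup A] {b : A → A → QZ}
    (ha : ∀ x y z : A, b (x+y) z = b x z + b y z) (m : ℕ) (x y : A) :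
    b (m • x) y = m • b x y := by
  induction m with
  | zero => simpa using b_zero_left ha y
  | succ m ih => rw [succ_nsmul, succ_nsmul, ha, ih]

lemma hasRef_zmod (n : ℕ) (hn : 0 < n) : HasRef (ZMod n) := by
  haveI : NeZero n := ⟨hn.ne'⟩
  intro b hs ha
  have hgen : ∀ s : ZMod n, s.val • (1 : ZMod n) = s := by
    intro s; rw [nsmul_eq_mul, mul_one]; exact ZMod.natCast_rightInverse s
  have hb : ∀ s t : ZMod n, b s t = (s.val * t.val) • b 1 1 := by
    intro s t
    conv_lhs => rw [← hgen s, ← hgen t]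
    rw [b_nsmul_left ha]
    have h2 : b 1 (t.val • 1) = t.val • b 1 1 := by
      rw [hs, b_nsmul_left ha, hs 1 1]
    rw [h2, ← mul_smul]
  obtain ⟨r, hr⟩ := exists_rep (b 1 1)
  have htor : n • b 1 1 = 0 := by
    rw [← b_nsmul_left ha n 1 1]
    have h1 : (n • (1 : ZMod n)) = 0 := by rw [nsmul_eq_mul, mul_one, ZMod.natCast_self]
    rw [h1]; exact b_zero_left ha 1
  obtain ⟨k, hk⟩ : ∃ k : ℤ, (n:ℚ) * r = (k:ℚ) := by
    apply coe_eq_zero.mp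
    rw [← coe_nsmul', ← hr]; exact htor
  have hnq : (n:ℚ) ≠ 0 := Nat.cast_ne_zero.mpr hn.ne'
  have hrk : r = (k:ℚ) / n := by field_simp [mul_comm] at hk ⊢; linarith [hk]
  set fq : ℕ → ℚ := fun m => ((k:ℚ)*((n:ℚ)+1)*(m:ℚ)^2)/(2*(n:ℚ)) with hfq
  refine ⟨fun s => ((fq s.val : ℚ) : QZ), ?_⟩
  intro s t
  have hq0 : ((fq (0 : ZMod n).val : ℚ) : QZ) = 0 := by
    rw [ZMod.val_zero]
    norm_num [hfq]
  simp only
  rw [hq0, add_zero]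
  -- identify b s t
  have hbst : b s t = ((((s.val:ℚ) * (t.val:ℚ)) * r : ℚ) : QZ) := by
    rw [hb s t, hr, coe_nsmul']
    congr 1
    push_cast; ring
  rw [hbst]
  -- arithmetic
  set a := s.val
  set c := t.val
  set u := (s+t).val with hu'
  have hun : u = (a + c) % n := ZMod.val_add s t
  set w := (a+c)/n with hw
  have hdm : n * w + (a+c) % n = a + c := Nat.div_add_mod (a+c) n
  have hdm2 : n * w + u = a + c := by rw [hun]; exact hdm
  have huZ : (u:ℤ) = a + c - w * n := by zify at hdm2; linear_combination hdm2
  obtain ⟨e, he⟩ : ∃ e, 2 * e = n * (n+1) := by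
    rcases Nat.even_mul_succ_self n with ⟨e, he⟩
    exact ⟨e, by omega⟩
  obtain ⟨z, hz⟩ := key_arith n hn k a c u w e huZ he
  have hfqz : fq u - fq a - fq c - ((a:ℚ)*(c:ℚ) * r) = (z:ℚ) := by
    rw [hrk, hfq]
    push_cast
    push_cast at hz
    linear_combination hz
  have hthis : ((fq u : ℚ) : QZ) - ((fq a : ℚ) : QZ) - ((fq c : ℚ) : QZ) - ((((a:ℚ)*(c:ℚ)) * r : ℚ) : QZ) = 0 := by
    rw [← AddCircle.coe_sub, ← AddCircle.coe_sub, ← AddCircle.coe_sub, hfqz, coe_int_eq_zero]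
  exact sub_eq_zero.mp hthis


def HasDual (A : Type*) [AddCommGroup A] : Prop := Nonempty ((A →+ QZ) ≃ A)

instance homSubsingleton {A : Type*} [AddCommGroup A] [Subsingleton A] :
    Subsingleton (A →+ QZ) :=
  ⟨fun f g => AddMonoidHom.ext fun x => by
    rw [Subsingleton.elim x 0, map_zero, map_zero]⟩

lemma hasDual_subsingleton (A : Type*) [AddCommGroup A] [Subsingleton A] : HasDual A :=
  ⟨equivOfSubsingletonOfSubsingleton (fun _ => 0) (fun _ => 0)⟩

lemma hasDual_zmod (n : ℕ) (hn : 1 < n) : HasDual (ZMod n) := by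
  haveI : NeZero n := ⟨by omega⟩
  haveI : Fact (1 < n) := ⟨hn⟩
  have hnq : (n:ℚ) ≠ 0 := Nat.cast_ne_zero.mpr (by omega)
  -- the pairing map
  have hadditive : ∀ s : ZMod n, ∀ t t' : ZMod n,
      ((((s.val:ℚ) * ((t+t').val:ℚ))/n : ℚ) : QZ)
      = (((s.val:ℚ) * (t.val:ℚ))/n : ℚ) + (((s.val:ℚ) * (t'.val:ℚ))/n : ℚ) := by
    intro s t t'
    rw [← AddCircle.coe_add]
    have hun : (t+t').val = (t.val + t'.val) % n := ZMod.val_add t t'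
    set w := (t.val + t'.val)/n with hw
    have hdm : n * w + (t.val + t'.val) % n = t.val + t'.val := Nat.div_add_mod _ n
    have key : ((s.val:ℚ) * ((t+t').val:ℚ))/n - (((s.val:ℚ) * (t.val:ℚ))/n + ((s.val:ℚ) * (t'.val:ℚ))/n)
        = ((-(s.val * w : ℤ) : ℤ) : ℚ) := by
      rw [hun]
      have h2 : (((t.val + t'.val) % n : ℕ) : ℚ) = (t.val:ℚ) + (t'.val:ℚ) - (w:ℚ)*(n:ℚ) := by
        have : ((n * w + (t.val + t'.val) % n : ℕ) : ℚ) = ((t.val + t'.val : ℕ) : ℚ) := by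
          exact_mod_cast congrArg (Nat.cast : ℕ → ℚ) hdm
        push_cast at this
        linarith
      rw [h2]
      push_cast
      field_simp
      ring
    have : (((s.val:ℚ) * ((t+t').val:ℚ))/n : ℚ) - ((((s.val:ℚ) * (t.val:ℚ))/n + ((s.val:ℚ) * (t'.val:ℚ))/n : ℚ)) = (0 : QZ) := by
      rw [← AddCircle.coe_sub, key]
      exact coe_eq_zero.mpr ⟨_, rfl⟩
    exact sub_eq_zero.mp this
  set Φ : ZMod n → (ZMod n →+ QZ) := fun s =>
    AddMonoidHom.mk' (fun t => ((((s.val:ℚ) * (t.val:ℚ))/n : ℚ) : QZ)) (hadditive s) with hΦ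
  have hgen : ∀ (φ : ZMod n →+ QZ) (t : ZMod n), φ t = t.val • φ 1 := by
    intro φ t
    conv_lhs => rw [show t = t.val • (1 : ZMod n) by
      rw [nsmul_eq_mul, mul_one]; exact (ZMod.natCast_rightInverse t).symm]
    rw [map_nsmul]
  have hinj : Function.Injective Φ := by
    intro s s' h
    have h1 : Φ s 1 = Φ s' 1 := by rw [h]
    simp only [hΦ, AddMonoidHom.mk'_apply, ZMod.val_one, Nat.cast_one, mul_one] at h1
    have h2 : (((s.val:ℚ)/n - (s'.val:ℚ)/n : ℚ) : QZ) = 0 := by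
      rw [AddCircle.coe_sub, h1, sub_self]
    obtain ⟨z, hzz⟩ := coe_eq_zero.mp h2
    have hb1 : s.val < n := ZMod.val_lt s
    have hb2 : s'.val < n := ZMod.val_lt s'
    obtain ⟨a, ha⟩ : ∃ a : ℕ, s.val = a := ⟨_, rfl⟩
    obtain ⟨c, hc⟩ : ∃ c : ℕ, s'.val = c := ⟨_, rfl⟩
    rw [ha] at hzz hb1
    rw [hc] at hzz hb2
    have haq : (a:ℚ) - (c:ℚ) = z * n := by
      field_simp at hzz
      linarith [hzz]
    have haZ : (a:ℤ) - (c:ℤ) = z * n := by exact_mod_cast haq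
    have hnZ : (0:ℤ) ≤ n := by positivity
    have hval : a = c := by
      rcases lt_trichotomy z 0 with h' | h' | h'
      · have h3 : z ≤ -1 := by omega
        have h4 := mul_le_mul_of_nonneg_right h3 hnZ
        have h5 : (a:ℤ) < n := by exact_mod_cast hb1
        have h6 : (0:ℤ) ≤ (c:ℤ) := by positivity
        have h7 : (c:ℤ) < n := by exact_mod_cast hb2
        have h8 : (0:ℤ) ≤ (a:ℤ) := by positivity
        simp only [neg_one_mul] at h4
        omega
      · subst h'
        simp at haZ
        omega
      · have h3 : 1 ≤ z := by omega
        have h4 := mul_le_mul_of_nonneg_right h3 hnZ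
        have h5 : (a:ℤ) < n := by exact_mod_cast hb1
        have h6 : (0:ℤ) ≤ (c:ℤ) := by positivity
        have h7 : (c:ℤ) < n := by exact_mod_cast hb2
        have h8 : (0:ℤ) ≤ (a:ℤ) := by positivity
        simp only [one_mul] at h4
        omega
    calc s = (s.val : ZMod n) := (ZMod.natCast_rightInverse s).symm
      _ = (s'.val : ZMod n) := by rw [ha, hc, hval]
      _ = s' := ZMod.natCast_rightInverse s'
  have hsurj : Function.Surjective Φ := by
    intro φ
    set ξ := φ 1 with hξ
    have htor : (((n:ℚ) * (AddCircle.equivIco (1:ℚ) 0 ξ : ℚ) : ℚ) : QZ) = 0 := by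
      rw [← coe_nsmul', rep_spec]
      rw [hξ, ← map_nsmul]
      have h1 : (n • (1 : ZMod n)) = 0 := by rw [nsmul_eq_mul, mul_one, ZMod.natCast_self]
      rw [h1, map_zero]
    obtain ⟨z, hz⟩ := coe_eq_zero.mp htor
    set r : ℚ := (AddCircle.equivIco (1:ℚ) 0 ξ : ℚ) with hrdef
    obtain ⟨hr0, hr1⟩ := rep_mem ξ
    have hz0 : 0 ≤ z := by
      have : (0:ℚ) ≤ z := by rw [← hz]; positivity
      exact_mod_cast this
    have hzn : z < n := by
      have : (z:ℚ) < n := by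
        rw [← hz]
        calc (n:ℚ) * r < (n:ℚ) * 1 := by
              apply mul_lt_mul_of_pos_left hr1
              positivity
          _ = n := mul_one _
      exact_mod_cast this
    refine ⟨(z.toNat : ZMod n), ?_⟩
    ext t
    rw [hgen φ t]
    have hΦt : Φ (z.toNat : ZMod n) t = ((((((z.toNat : ZMod n).val):ℚ) * (t.val:ℚ))/n : ℚ) : QZ) := rfl
    rw [hΦt]
    have hvalz : ((z.toNat : ZMod n)).val = z.toNat := by
      apply ZMod.val_cast_of_lt
      omega
    have hrz : r = (z:ℚ)/n := by
      field_simp [mul_comm] at hz ⊢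
      linarith [hz]
    have : ((((z.toNat : ZMod n).val:ℚ) * (t.val:ℚ))/n : ℚ) = (t.val:ℚ) * r := by
      rw [hvalz, hrz]
      have : ((z.toNat : ℚ)) = (z:ℚ) := by
        norm_cast
        omega
      rw [this]
      ring
    rw [this, ← coe_nsmul', rep_spec]
  exact ⟨(Equiv.ofBijective Φ ⟨hinj, hsurj⟩).symm⟩


def Good (A : Type*) [AddCommGroup A] : Prop := HasRef A ∧ HasDual A


lemma b_zero_left' {A : Type*} [AddCommGroup A] {b : A → A → QZ}
    (ha : ∀ x y z : A, b (x+y) z = b x z + b y z) (y : A) : b 0 y = 0 := by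
  have := ha 0 0 y; rw [add_zero] at this; exact left_eq_add.mp this

lemma hasRef_subsingleton (A : Type*) [AddCommGroup A] [Subsingleton A] : HasRef A := by
  intro b hs ha
  refine ⟨fun _ => 0, fun x y => ?_⟩
  have hx : x = 0 := Subsingleton.elim _ _
  have : b x y = 0 := by rw [hx]; exact b_zero_left' ha y
  rw [this]; abel

lemma good_subsingleton (A : Type*) [AddCommGroup A] [Subsingleton A] : Good A :=
  ⟨hasRef_subsingleton A, hasDual_subsingleton A⟩

lemma good_zmod (n : ℕ) (hn : 1 < n) : Good (ZMod n) :=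
  ⟨hasRef_zmod n (by omega), hasDual_zmod n hn⟩

-- transfer along AddEquiv
lemma hasRef_congr {A B : Type*} [AddCommGroup A] [AddCommGroup B] (e : A ≃+ B)
    (h : HasRef A) : HasRef B := by
  intro b hs ha
  obtain ⟨q, hq⟩ := h (fun x y => b (e x) (e y)) (fun x y => hs _ _)
    (fun x y z => by
      show b (e (x+y)) (e z) = b (e x) (e z) + b (e y) (e z)
      rw [map_add, ha])
  have H : ∀ u v : A, q (u+v) - q u - q v + q 0 = b (e u) (e v) := hq
  refine ⟨fun x => q (e.symm x), fun x y => ?_⟩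
  show q (e.symm (x+y)) - q (e.symm x) - q (e.symm y) + q (e.symm 0) = b x y
  rw [map_zero, map_add, H (e.symm x) (e.symm y), AddEquiv.apply_symm_apply,
    AddEquiv.apply_symm_apply]

def homPrecompEquiv {A B M : Type*} [AddCommGroup A] [AddCommGroup B] [AddCommMonoid M]
    (e : A ≃+ B) : (B →+ M) ≃ (A →+ M) where
  toFun f := f.comp e.toAddMonoidHom
  invFun f := f.comp e.symm.toAddMonoidHom
  left_inv f := by ext b; simp
  right_inv f := by ext a; simp

lemma hasDual_congr {A B : Type*} [AddCommGroup A] [AddCommGroup B] (e : A ≃+ B)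
    (h : HasDual A) : HasDual B := by
  obtain ⟨d⟩ := h
  exact ⟨((homPrecompEquiv (M := QZ) e).trans d).trans e.toEquiv⟩

lemma good_congr {A B : Type*} [AddCommGroup A] [AddCommGroup B] (e : A ≃+ B)
    (h : Good A) : Good B :=
  ⟨hasRef_congr e h.1, hasDual_congr e h.2⟩

-- products
def homProdEquiv (A B M : Type*) [AddCommGroup A] [AddCommGroup B] [AddCommMonoid M] :
    (A × B →+ M) ≃ (A →+ M) × (B →+ M) where
  toFun f := (f.comp (AddMonoidHom.inl A B), f.comp (AddMonoidHom.inr A B))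
  invFun p := (p.1.comp (AddMonoidHom.fst A B)) + (p.2.comp (AddMonoidHom.snd A B))
  left_inv f := by
    ext ⟨a, c⟩
    simp only [AddMonoidHom.add_apply, AddMonoidHom.coe_comp, Function.comp_apply,
      AddMonoidHom.coe_fst, AddMonoidHom.coe_snd, AddMonoidHom.inl_apply, AddMonoidHom.inr_apply]
    rw [← map_add]
    congr 1
    simp [Prod.ext_iff]
  right_inv p := by
    refine Prod.ext ?_ ?_ <;> ext x <;>
      simp

lemma hasDual_prod {A B : Type*} [AddCommGroup A] [AddCommGroup B]
    (hA : HasDual A) (hB : HasDual B) : HasDual (A × B) := by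
  obtain ⟨dA⟩ := hA; obtain ⟨dB⟩ := hB
  exact ⟨(homProdEquiv A B QZ).trans (Equiv.prodCongr dA dB)⟩

lemma hasRef_prod {A B : Type*} [AddCommGroup A] [AddCommGroup B]
    (hA : HasRef A) (hB : HasRef B) : HasRef (A × B) := by
  intro b hs ha
  have ha2 : ∀ (x y z : A × B), b x (y + z) = b x y + b x z := by
    intro x y z; rw [hs, ha, hs y x, hs z x]
  obtain ⟨qA, hqA⟩ := hA (fun a a' => b (a, 0) (a', 0)) (fun x y => hs _ _)
    (fun x y z => by
      show b ((x+y), (0:B)) (z, 0) = b (x,0) (z,0) + b (y,0) (z,0)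
      rw [show ((x+y:A),(0:B)) = ((x,(0:B)) + (y,(0:B))) by simp, ha])
  obtain ⟨qB, hqB⟩ := hB (fun c c' => b (0, c) (0, c')) (fun x y => hs _ _)
    (fun x y z => by
      show b ((0:A), x+y) (0, z) = b (0,x) (0,z) + b (0,y) (0,z)
      rw [show (((0:A), x + y) : A × B) = (((0:A),x) + ((0:A),y)) by simp, ha])
  refine ⟨fun p => qA p.1 + qB p.2 + b (p.1, 0) (0, p.2), ?_⟩
  rintro ⟨a, c⟩ ⟨a', c'⟩
  show (qA (a+a') + qB (c+c') + b (a+a', 0) (0, c+c'))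
      - (qA a + qB c + b (a,0) (0,c)) - (qA a' + qB c' + b (a',0) (0,c'))
      + (qA 0 + qB 0 + b (0,0) (0,0)) = b (a,c) (a',c')
  have HA : qA (a+a') - qA a - qA a' + qA 0 = b (a,0) (a',0) := hqA a a'
  have HB : qB (c+c') - qB c - qB c' + qB 0 = b (0,c) (0,c') := hqB c c'
  have e1 : b (a+a',(0:B)) ((0:A),c+c')
      = b (a,0) (0,c) + b (a,0) (0,c') + b (a',0) (0,c) + b (a',0) (0,c') := by
    rw [show ((a+a':A),(0:B)) = ((a,(0:B)) + (a',(0:B))) by simp, ha,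
      show (((0:A), c+c') : A × B) = (((0:A),c) + ((0:A),c')) by simp, ha2, ha2]
    abel
  have e2 : b ((0:A),(0:B)) ((0:A),(0:B)) = 0 := b_zero_left' ha ((0:A),(0:B))
  have e3 : b (a,c) (a',c')
      = b (a,0) (a',0) + b (a,0) (0,c') + b (0,c) (a',0) + b (0,c) (0,c') := by
    rw [show ((a,c) : A × B) = ((a,(0:B)) + ((0:A),c)) by simp, ha,
      show ((a',c') : A × B) = ((a',(0:B)) + ((0:A),c')) by simp, ha2, ha2]
    abel
  have e4 : b ((0:A),c) (a',(0:B)) = b (a',0) (0,c) := hs _ _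
  rw [e1, e2, e3, e4, ← HA, ← HB]
  abel


lemma good_prod {A B : Type*} [AddCommGroup A] [AddCommGroup B]
    (hA : Good A) (hB : Good B) : Good (A × B) :=
  ⟨hasRef_prod hA.1 hB.1, hasDual_prod hA.2 hB.2⟩


def piFinSuccAddEquiv (N : ℕ) (M : Fin (N+1) → Type*) [∀ j, AddCommGroup (M j)] :
    (∀ j, M j) ≃+ M 0 × ∀ j : Fin N, M (Fin.succAbove 0 j) :=
  { (Fin.insertNthEquiv M 0).symm with
    map_add' := fun f g => rfl }

def piCongrLeftAddEquiv {ι κ : Type*} (e : ι ≃ κ) (β : ι → Type*)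
    [∀ i, AddCommGroup (β i)] : (∀ i, β i) ≃+ ∀ k, β (e.symm k) :=
  { Equiv.piCongrLeft' β e with map_add' := fun f g => rfl }

def dfinsuppPiAddEquiv {ι : Type*} [Fintype ι] {β : ι → Type*}
    [∀ i, AddCommGroup (β i)] [∀ (i : ι) (x : β i), Decidable (x ≠ 0)] :
    (Π₀ i, β i) ≃+ ∀ i, β i :=
  { DFinsupp.equivFunOnFintype with map_add' := fun f g => rfl }

lemma good_pi_fin : ∀ (N : ℕ) (M : Fin N → Type) (_ : ∀ j, AddCommGroup (M j)),
    (∀ j, Good (M j)) → Good (∀ j, M j) := by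
  intro N
  induction N with
  | zero =>
    intro M instM _
    exact good_subsingleton _
  | succ N ih =>
    intro M instM h
    exact good_congr (piFinSuccAddEquiv N M).symm
      (good_prod (h 0) (ih _ _ (fun j => h _)))

lemma good_of_finite (A : Type*) [AddCommGroup A] [Finite A] : Good A := by
  classical
  obtain ⟨ι, hι, n, hn, ⟨e⟩⟩ := AddCommGroup.equiv_directSum_zmod_of_finite' A
  let σ := Fintype.equivFin ι
  have hgood : Good (∀ j : Fin (Fintype.card ι), ZMod (n (σ.symm j))) :=
    good_pi_fin _ _ _ (fun j => good_zmod _ (hn _))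
  have e2 : (∀ j : Fin (Fintype.card ι), ZMod (n (σ.symm j))) ≃+ A :=
    ((e.trans (dfinsuppPiAddEquiv (β := fun i => ZMod (n i)))).trans
      (piCongrLeftAddEquiv σ (fun i => ZMod (n i)))).symm
  exact good_congr e2 hgood


lemma adjoint_surj (b : D → D → QZ)
    (hsymm : ∀ x y : D, b x y = b y x)
    (hadd : ∀ x y z : D, b (x + y) z = b x z + b y z)
    (hnd : ∀ x : D, (∀ y : D, b x y = 0) → x = 0)
    (φ : D →+ QZ) : ∃ t : D, ∀ x, φ x = b x t := by
  classical
  obtain ⟨dEquiv⟩ := (good_of_finite D).2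
  haveI : Fintype (D →+ QZ) := Fintype.ofEquiv D dEquiv.symm
  have hcard : Fintype.card D = Fintype.card (D →+ QZ) := (Fintype.card_congr dEquiv).symm
  set Φ : D → (D →+ QZ) := fun t => AddMonoidHom.mk' (fun x => b x t) (fun x y => hadd x y t)
    with hΦ
  have hsub : ∀ u v y : D, b (u - v) y = b u y - b v y := by
    intro u v y
    have := hadd (u - v) v y
    rw [sub_add_cancel] at this
    rw [eq_sub_iff_add_eq, ← this]
  have hinj : Function.Injective Φ := by
    intro t t' h
    have hx : ∀ x, b x t = b x t' := by
      intro x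
      have := DFunLike.congr_fun h x
      simpa [hΦ] using this
    have : t - t' = 0 := by
      apply hnd
      intro y
      rw [hsub t t' y, hsymm t y, hsymm t' y, hx y, sub_self]
    rwa [sub_eq_zero] at this
  have hbij : Function.Bijective Φ :=
    (Fintype.bijective_iff_injective_and_card Φ).mpr ⟨hinj, hcard⟩
  obtain ⟨t, ht⟩ := hbij.2 φ
  exact ⟨t, fun x => by rw [← ht]; simp [hΦ]⟩

lemma refinements_shift (b : D → D → QZ)
    (hsymm : ∀ x y : D, b x y = b y x)
    (hadd : ∀ x y z : D, b (x + y) z = b x z + b y z)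
    (hnd : ∀ x : D, (∀ y : D, b x y = 0) → x = 0)
    (q q' : D → QZ)
    (hq : ∀ x y, q (x + y) - q x - q y + q 0 = b x y)
    (hq' : ∀ x y, q' (x + y) - q' x - q' y + q' 0 = b x y) :
    ∃ (t : D) (c : QZ), ∀ x, q' x = q (x + t) + c := by
  set d : D → QZ := fun x => q' x - q x - (q' 0 - q 0) with hd
  have hadd' : ∀ x y, d (x + y) = d x + d y := by
    intro x y
    have h1 := hq x y
    have h2 := hq' x y
    simp only [hd]
    have e1 : q (x+y) = b x y + q x + q y - q 0 := by rw [← h1]; abel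
    have e2 : q' (x+y) = b x y + q' x + q' y - q' 0 := by rw [← h2]; abel
    rw [e1, e2]
    abel
  obtain ⟨t, ht⟩ := adjoint_surj b hsymm hadd hnd (AddMonoidHom.mk' d hadd')
  refine ⟨t, q' 0 - q 0 - q t + q 0, fun x => ?_⟩
  have h3 : d x = b x t := by simpa using ht x
  have h4 : b x t = q (x + t) - q x - q t + q 0 := (hq x t).symm
  simp only [hd] at h3
  rw [h4] at h3
  have : q' x = q x + (q' 0 - q 0) + (q (x + t) - q x - q t + q 0) := by
    rw [← h3]; abel
  rw [this]; abel


lemma gauss_real (q : D → QZ) (γ : D ≃+ D) (δ : D)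
    (hT : ∀ x, q (γ x) = -(q (x + δ))) :
    (starRingEnd ℂ) (qGaussSumOne q) = qGaussSumOne q := by
  rw [qGaussSumOne_eq, map_sum]
  calc ∑ x : D, (starRingEnd ℂ) (stdAddChar (q x))
      = ∑ x : D, stdAddChar (-(q x)) := by
        refine Finset.sum_congr rfl fun x _ => ?_; rw [stdAddChar_neg]
    _ = ∑ x : D, stdAddChar (-(q (γ x))) :=
        (Equiv.sum_comp γ.toEquiv (fun x => stdAddChar (-(q x)))).symm
    _ = ∑ x : D, stdAddChar (q (x + δ)) := by
        refine Finset.sum_congr rfl fun x _ => ?_; rw [hT, neg_neg]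
    _ = ∑ x : D, stdAddChar (q x) :=
        Equiv.sum_comp (Equiv.addRight δ) (fun x => stdAddChar (q x))

lemma real_phase (s : ℝ) (hs : s ≠ 0) :
    ((s:ℂ)) / ((‖((s:ℝ):ℂ)‖ : ℝ) : ℂ) = if 0 < s then 1 else -1 := by
  rw [Complex.norm_real, Real.norm_eq_abs]
  rcases hs.lt_or_gt with h | h
  · rw [if_neg (not_lt.mpr h.le), abs_of_neg h]
    push_cast
    rw [div_neg, div_self (by exact_mod_cast hs)]
  · rw [if_pos h, abs_of_pos h]
    exact div_self (by exact_mod_cast hs)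

lemma phase_select (b : D → D → QZ)
    (hsymm : ∀ x y : D, b x y = b y x)
    (hadd : ∀ x y z : D, b (x + y) z = b x z + b y z)
    (hnd : ∀ x : D, (∀ y : D, b x y = 0) → x = 0)
    (q2 : D → QZ) (hq2 : ∀ x y, q2 (x + y) - q2 x - q2 y + q2 0 = b x y)
    (f : D ≃+ D) (t : D) (hT2 : ∀ x, q2 (f x) = -(q2 (x + t)))
    (P : ℂ) (hP : P = 1 ∨ P = -1) :
    ∃ qh : D → QZ, (∀ x y, qh (x + y) - qh x - qh y + qh 0 = b x y) ∧
      (∃ (γ : D ≃+ D) (δ : D), ∀ x : D, qh (γ x) = - qh (x + δ)) ∧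
      qGaussSumOne qh ≠ 0 ∧
      qGaussSumOne qh / (‖qGaussSumOne qh‖ : ℂ) = P := by
  set h2 : QZ := ((1/2 : ℚ) : QZ) with hh2
  have hh2z : h2 + h2 = 0 := by
    rw [hh2, ← AddCircle.coe_add]
    norm_num
  set q3 : D → QZ := fun x => q2 x + h2 with hq3def
  have hq3 : ∀ x y, q3 (x + y) - q3 x - q3 y + q3 0 = b x y := by
    intro x y
    show q2 (x+y) + h2 - (q2 x + h2) - (q2 y + h2) + (q2 0 + h2) = b x y
    rw [← hq2 x y]; abel
  have hT3 : ∀ x, q3 (f x) = -(q3 (x + t)) := by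
    intro x
    show q2 (f x) + h2 = -(q2 (x+t) + h2)
    rw [hT2 x]
    have h6 : -(q2 (x+t) + h2) = -q2 (x+t) + h2 - (h2 + h2) := by abel
    rw [h6, hh2z, sub_zero]
  -- Gauss sums
  have hreal2 : (starRingEnd ℂ) (qGaussSumOne q2) = qGaussSumOne q2 :=
    gauss_real q2 f t hT2
  have hsq2 := qGauss_normSq b hadd hnd hsymm q2 hq2
  have hne2 : qGaussSumOne q2 ≠ 0 := by
    intro h
    rw [h, zero_mul] at hsq2
    have : (0:ℂ) ≠ (Fintype.card D : ℂ) := by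
      have : 0 < Fintype.card D := Fintype.card_pos
      exact_mod_cast this.ne
    exact this hsq2
  obtain ⟨s, hs⟩ := Complex.conj_eq_iff_real.mp hreal2
  have hsne : s ≠ 0 := by
    intro h; rw [h] at hs; norm_num at hs; exact hne2 hs
  have hgauss3 : qGaussSumOne q3 = -(qGaussSumOne q2) := by
    rw [hq3def, qGauss_const q2 h2, hh2, stdAddChar_half]
    ring
  rcases hP with rfl | rfl
  · by_cases hpos : 0 < s
    · refine ⟨q2, hq2, ⟨f, t, fun x => by rw [hT2 x]⟩, hne2, ?_⟩
      rw [hs]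
      rw [real_phase s hsne, if_pos hpos]
    · refine ⟨q3, hq3, ⟨f, t, fun x => by rw [hT3 x]⟩, ?_, ?_⟩
      · rw [hgauss3]; simpa using hne2
      · rw [hgauss3, hs]
        have : -((s:ℂ)) = ((-s : ℝ):ℂ) := by push_cast; ring
        rw [this, real_phase (-s) (neg_ne_zero.mpr hsne), if_pos (by
          rcases hsne.lt_or_gt with h | h
          · linarith
          · exact absurd h hpos)]
  · by_cases hpos : 0 < s
    · refine ⟨q3, hq3, ⟨f, t, fun x => by rw [hT3 x]⟩, ?_, ?_⟩
      · rw [hgauss3]; simpa using hne2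
      · rw [hgauss3, hs]
        have : -((s:ℂ)) = ((-s : ℝ):ℂ) := by push_cast; ring
        rw [this, real_phase (-s) (neg_ne_zero.mpr hsne), if_neg (by linarith)]
    · refine ⟨q2, hq2, ⟨f, t, fun x => by rw [hT2 x]⟩, hne2, ?_⟩
      rw [hs, real_phase s hsne, if_neg hpos]

end TRef

open TRef in

/-- Let `(D,b)` be a bilinear T-form and `σ ∈ {0,4}`.  Then there exists a quadratic
T-refinement of `b` with first Gauss sum of phase `exp(2πiσ/8)`, and it is unique up
to an isometry of `b` and a shift of the argument. -/
theorem T_refinement_exists_and_unique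
    {D : Type*} [AddCommGroup D] [Fintype D]
    (b : D → D → AddCircle (1:ℚ))
    (hsymm : ∀ x y : D, b x y = b y x)
    (hadd : ∀ x y z : D, b (x + y) z = b x z + b y z)
    (hnd : ∀ x : D, (∀ y : D, b x y = 0) → x = 0)
    (hT : ∃ f : D ≃+ D, ∀ x y : D, b (f x) (f y) = - b x y)
    (σ : ℕ) (hσ : σ = 0 ∨ σ = 4) :
    (∃ qh : D → AddCircle (1:ℚ), IsTRefinementWithPhase b σ qh) ∧
    (∀ qh qh' : D → AddCircle (1:ℚ),
      IsTRefinementWithPhase b σ qh → IsTRefinementWithPhase b σ qh' →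
      ∃ (γ : D ≃+ D) (δ : D),
        (∀ x y : D, b (γ x) (γ y) = b x y) ∧
        (∀ x : D, qh' x = qh (γ x + δ))) := by
  have hPval : Complex.exp (2 * Real.pi * Complex.I * σ / 8) = 1 ∨
      Complex.exp (2 * Real.pi * Complex.I * σ / 8) = -1 := by
    rcases hσ with rfl | rfl
    · left
      norm_num [Complex.exp_zero]
    · right
      have : (2 * (Real.pi:ℂ) * Complex.I * ((4:ℕ):ℂ) / 8) = (Real.pi:ℂ) * Complex.I := by
        push_cast; ring
      rw [this]
      exact Complex.exp_pi_mul_I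
  constructor
  · -- existence
    obtain ⟨f, hf⟩ := hT
    obtain ⟨q0, hq0⟩ := (good_of_finite D).1 b hsymm hadd
    have hq1 : ∀ x y : D, (fun x => -(q0 (f x))) (x + y) - (fun x => -(q0 (f x))) x
        - (fun x => -(q0 (f x))) y + (fun x => -(q0 (f x))) 0 = b x y := by
      intro x y
      show -(q0 (f (x+y))) - -(q0 (f x)) - -(q0 (f y)) + -(q0 (f 0)) = b x y
      rw [map_add, map_zero]
      have h := hq0 (f x) (f y)
      rw [hf] at h
      have h2 : -(q0 (f x + f y) - q0 (f x) - q0 (f y) + q0 0) = b x y := by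
        rw [h]; abel
      rw [← h2]; abel
    obtain ⟨t, c, htc⟩ := refinements_shift b hsymm hadd hnd q0
      (fun x => -(q0 (f x))) hq0 hq1
    set a : QZ := (((AddCircle.equivIco (1:ℚ) 0 c : ℚ)/2 : ℚ) : QZ) with ha
    have ha2 : a + a = c := by
      rw [ha, ← AddCircle.coe_add]
      have : ((AddCircle.equivIco (1:ℚ) 0 c : ℚ)/2 + (AddCircle.equivIco (1:ℚ) 0 c : ℚ)/2 : ℚ)
          = (AddCircle.equivIco (1:ℚ) 0 c : ℚ) := by ring
      rw [this, rep_spec]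
    set q2 : D → QZ := fun x => q0 x + a with hq2def
    have hq2 : ∀ x y, q2 (x + y) - q2 x - q2 y + q2 0 = b x y := by
      intro x y
      show q0 (x+y) + a - (q0 x + a) - (q0 y + a) + (q0 0 + a) = b x y
      rw [← hq0 x y]; abel
    have hT2 : ∀ x, q2 (f x) = -(q2 (x + t)) := by
      intro x
      show q0 (f x) + a = -(q0 (x+t) + a)
      have h5 : q0 (f x) = -(q0 (x+t) + c) := by
        rw [← htc x, neg_neg]
      rw [h5, ← ha2]; abel
    obtain ⟨qh, h1, h2, h3, h4⟩ := phase_select b hsymm hadd hnd q2 hq2 f t hT2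
      (Complex.exp (2 * Real.pi * Complex.I * σ / 8)) hPval
    exact ⟨qh, h1, h2, h3, h4⟩
  · -- uniqueness
    intro qh qh' h h'
    obtain ⟨hq, _, hne, hph⟩ := h
    obtain ⟨hq', _, hne', hph'⟩ := h'
    obtain ⟨t, c, htc⟩ := refinements_shift b hsymm hadd hnd qh qh' hq hq'
    have hτ' : qGaussSumOne qh' = stdAddChar c * qGaussSumOne qh := by
      have hfe : qh' = fun x => (fun y => qh (y + t)) x + c := funext htc
      rw [hfe, qGauss_const (fun y => qh (y + t)) c, qGauss_shift]
    -- phases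
    set T := Complex.exp (2 * Real.pi * Complex.I * σ / 8) with hT'
    have hTne : T ≠ 0 := Complex.exp_ne_zero _
    have habs : ‖qGaussSumOne qh‖ ≠ 0 := by
      simpa using hne
    have habs' : ‖qGaussSumOne qh'‖ ≠ 0 := by
      simpa using hne'
    have hAc : ((‖qGaussSumOne qh‖ : ℝ) : ℂ) ≠ 0 := by exact_mod_cast habs
    have hAc' : ((‖qGaussSumOne qh'‖ : ℝ) : ℂ) ≠ 0 := by exact_mod_cast habs'
    have e1 : qGaussSumOne qh = (‖qGaussSumOne qh‖ : ℂ) * T := by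
      rw [← hph, mul_comm]
      exact (div_mul_cancel₀ _ hAc).symm
    have e1' : qGaussSumOne qh' = (‖qGaussSumOne qh'‖ : ℂ) * T := by
      rw [← hph', mul_comm]
      exact (div_mul_cancel₀ _ hAc').symm
    have e2 : stdAddChar c * ((‖qGaussSumOne qh‖ : ℂ) * T)
        = (‖qGaussSumOne qh'‖ : ℂ) * T := by
      rw [← e1, ← e1']
      rw [hτ']
    have e2' : (stdAddChar c * (‖qGaussSumOne qh‖ : ℂ)) * T
        = (‖qGaussSumOne qh'‖ : ℂ) * T := by
      rw [mul_assoc]; exact e2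
    have e3 : stdAddChar c * (‖qGaussSumOne qh‖ : ℂ)
        = (‖qGaussSumOne qh'‖ : ℂ) := mul_right_cancel₀ hTne e2'
    have e4 : ‖qGaussSumOne qh‖ = ‖qGaussSumOne qh'‖ := by
      have := congrArg (fun z : ℂ => ‖z‖) e3
      rw [norm_mul, stdAddChar_abs, one_mul, Complex.norm_real, Complex.norm_real,
        norm_norm, norm_norm] at this
      exact this
    have e5 : stdAddChar c = 1 := by
      rw [← e4] at e3
      exact mul_right_cancel₀ hAc (by rw [one_mul]; exact e3)
    have hc0 : c = 0 := stdAddChar_eq_one_iff.mp e5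
    refine ⟨AddEquiv.refl D, t, fun x y => rfl, fun x => ?_⟩
    have := htc x
    rw [hc0, add_zero] at this
    simpa using this
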